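/- The combined functor S_T(X) = (X → R) → T(X), where T is any monad equipped with a T-algebra α : T(R) → R, is a monad: unit η(x) = λf. η_T(x) and bind (m >>= g)(f) = m(λx. α (T(f) (g x f))) >>=_T (λx. g x f) satisfy the three monad laws, provided α is a T-algebra (α ∘ η_T = id, α ∘ T(α) = α ∘ μ_T). -/
import Mathlib


section

variable (R : Type) (T : Type → Type)
  (pureT : {X : Type} → X → T X)
  (bindT : {X Y : Type} → T X → (X → T Y) → T Y)
  (mapT : {X Y : Type} → (X → Y) → T X → T Y)
  (α : T R → R)

/-- The combined functor `S_T(X) = (X → R) → T(X)`. -/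
def SelT (X : Type) : Type := (X → R) → T X

/-- Unit: `η(x)(f) = η_T(x)`. -/
def SelT.ret {X : Type} (x : X) : SelT R T X := fun _ => pureT x

/-- Bind: `(m >>= g)(f) = m (λx. α (T(f) (g x f))) >>=_T (λx. g x f)`. -/
def SelT.bind {X Y : Type} (m : SelT R T X) (g : X → SelT R T Y) : SelT R T Y :=
  fun f => bindT (m (fun x => α (mapT f (g x f)))) (fun x => g x f)

/-- If `T` is a monad (with `mapT` and `muT` related to bind in the usual way)
and `α : T(R) → R` is a `T`-algebra (`α ∘ η_T = id`, `α ∘ T(α) = α ∘ μ_T`),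
then `S_T(X) = (X → R) → T(X)` with the unit and bind above satisfies the three
monad laws. -/
theorem ST_monad_laws
    (muT : {X : Type} → T (T X) → T X)
    (h_left : ∀ {X Y : Type} (x : X) (g : X → T Y), bindT (pureT x) g = g x)
    (h_right : ∀ {X : Type} (t : T X), bindT t pureT = t)
    (h_assoc : ∀ {X Y Z : Type} (t : T X) (g : X → T Y) (h : Y → T Z),
      bindT (bindT t g) h = bindT t (fun x => bindT (g x) h))
    (h_map : ∀ {X Y : Type} (f : X → Y) (t : T X),
      mapT f t = bindT t (fun x => pureT (f x)))
    (h_mu : ∀ {X : Type} (t : T (T X)), muT t = bindT t id)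
    (h_alg1 : ∀ r : R, α (pureT r) = r)
    (h_alg2 : ∀ t : T (T R), α (mapT α t) = α (muT t)) :
    (∀ (X Y : Type) (x : X) (g : X → SelT R T Y),
      SelT.bind R T bindT mapT α (SelT.ret R T pureT x) g = g x) ∧
    (∀ (X : Type) (m : SelT R T X),
      SelT.bind R T bindT mapT α m (SelT.ret R T pureT) = m) ∧
    (∀ (X Y Z : Type) (m : SelT R T X) (g : X → SelT R T Y) (h : Y → SelT R T Z),
      SelT.bind R T bindT mapT α (SelT.bind R T bindT mapT α m g) h =
        SelT.bind R T bindT mapT α m (fun x => SelT.bind R T bindT mapT α (g x) h)) := by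
  -- key lemma: α (mapT (fun y => α (p y)) t) = α (bindT t p)
  have key : ∀ {Y : Type} (t : T Y) (p : Y → T R),
      α (mapT (fun y => α (p y)) t) = α (bindT t p) := by
    intro Y t p
    have h1 : mapT (fun y => α (p y)) t = mapT α (mapT p t) := by
      rw [h_map, h_map, h_map, h_assoc]
      simp only [h_left]
    rw [h1, h_alg2, h_mu]
    congr 1
    rw [h_map, h_assoc]
    simp only [h_left, id]
  refine ⟨?_, ?_, ?_⟩
  · intro X Y x g
    funext f
    simp only [SelT.bind, SelT.ret, h_left]
  · intro X m
    funext f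
    simp only [SelT.bind, SelT.ret]
    have : (fun x => α (mapT f (pureT x))) = f := by
      funext x
      rw [h_map, h_left, h_alg1]
    rw [this, h_right]
  · intro X Y Z m g h
    funext f
    simp only [SelT.bind]
    set k : Y → R := fun y => α (mapT f (h y f)) with hk
    have hweight : ∀ x : X,
        α (mapT f (bindT (g x k) (fun y => h y f))) = α (mapT k (g x k)) := by
      intro x
      rw [hk, key]
      congr 1
      rw [h_map, h_assoc]
      congr 1
      funext y
      rw [h_map]
    simp only [hweight, h_assoc]

end
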